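/- Let α ≠ 0 and (a₁, b₁) ∈ ℝ² with (a₁, b₁) ≠ (0,0). Then the pair x* = ∛(4a₁³/(3α(a₁² + b₁²))), y* = ∛(4b₁³/(3α(a₁² + b₁²))) (real cube roots) satisfies the algebraic system b₁ x* = a₁ y* and a₁ x* + b₁ y* = (3α/4) ((x*)² + (y*)²)². -/

import Mathlib

/-!
Writing `4 a₁³ / (3 α (a₁² + b₁²)) = a₁³ c` with `c = 4 / (3 α (a₁² + b₁²))`, the real cube root
gives `x* = a₁ k` and `y* = b₁ k` with `k = ∛c`. The first equation is then immediate, and the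
second reduces to `(a₁² + b₁²) k = (3α/4) (a₁² + b₁²)² k⁴`, which is `k³ = c`.
-/

open Real

/-- The real cube root. -/
noncomputable def cbrt (x : ℝ) : ℝ := Real.sign x * |x| ^ ((1 : ℝ) / 3)

theorem cbrt_pow_three (x : ℝ) : cbrt x ^ 3 = x := by
  have hroot : (|x| ^ ((1 : ℝ) / 3)) ^ 3 = |x| := by
    simpa using Real.rpow_inv_natCast_pow (abs_nonneg x) three_ne_zero
  rw [cbrt, mul_pow, hroot]
  rcases lt_trichotomy x 0 with h | rfl | h
  · rw [Real.sign_of_neg h, abs_of_neg h]; ring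
  · simp
  · rw [Real.sign_of_pos h, abs_of_pos h]; ring

theorem cbrt_eq_of_pow_three_eq {x y : ℝ} (h : y ^ 3 = x) : cbrt x = y :=
  (Odd.strictMono_pow (by decide : Odd 3)).injective (by simp only [cbrt_pow_three, h])

theorem cbrt_pow_three_mul (a c : ℝ) : cbrt (a ^ 3 * c) = a * cbrt c :=
  cbrt_eq_of_pow_three_eq (by rw [mul_pow, cbrt_pow_three])

theorem scaled_pair_solves {α a b k : ℝ} (hk : 3 * α * (a ^ 2 + b ^ 2) * k ^ 3 = 4) :
    b * (a * k) = a * (b * k) ∧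
      a * (a * k) + b * (b * k) = (3 * α / 4) * ((a * k) ^ 2 + (b * k) ^ 2) ^ 2 :=
  ⟨by ring, by linear_combination (-(a ^ 2 + b ^ 2) * k / 4) * hk⟩

/-- the pair (x*, y*) given by real cube roots solves the algebraic system
b₁x* = a₁y* and a₁x* + b₁y* = (3α/4)((x*)² + (y*)²)². -/
theorem stmt_9 (α a₁ b₁ : ℝ) (hα : α ≠ 0) (hab : (a₁, b₁) ≠ (0, 0)) :
    b₁ * cbrt (4 * a₁ ^ 3 / (3 * α * (a₁ ^ 2 + b₁ ^ 2)))
      = a₁ * cbrt (4 * b₁ ^ 3 / (3 * α * (a₁ ^ 2 + b₁ ^ 2))) ∧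
    a₁ * cbrt (4 * a₁ ^ 3 / (3 * α * (a₁ ^ 2 + b₁ ^ 2)))
        + b₁ * cbrt (4 * b₁ ^ 3 / (3 * α * (a₁ ^ 2 + b₁ ^ 2)))
      = (3 * α / 4) * (cbrt (4 * a₁ ^ 3 / (3 * α * (a₁ ^ 2 + b₁ ^ 2))) ^ 2 +
          cbrt (4 * b₁ ^ 3 / (3 * α * (a₁ ^ 2 + b₁ ^ 2))) ^ 2) ^ 2 := by
  set D := 3 * α * (a₁ ^ 2 + b₁ ^ 2)
  have hS : a₁ ^ 2 + b₁ ^ 2 ≠ 0 := by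
    contrapose! hab
    have ha : a₁ = 0 := by nlinarith [sq_nonneg a₁, sq_nonneg b₁]
    have hb : b₁ = 0 := by nlinarith [sq_nonneg a₁, sq_nonneg b₁]
    simp [ha, hb]
  have hD : D ≠ 0 := mul_ne_zero (mul_ne_zero three_ne_zero hα) hS
  have hscale (u : ℝ) : cbrt (4 * u ^ 3 / D) = u * cbrt (4 / D) := by
    rw [← cbrt_pow_three_mul]; congr 1; ring
  rw [hscale a₁, hscale b₁]
  refine scaled_pair_solves ?_
  rw [cbrt_pow_three, mul_div_cancel₀ _ hD]
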